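/- arXiv:1301.1406 — 3 statements merged into one kernel-verified Lean document; each statement's English description precedes it below -/
import Mathlib

section
/- If S is an unextendible product basis in the tensor product of Hilbert spaces C^{d_1} ⊗ ... ⊗ C^{d_p}, then S has at least (d_1 - 1) + (d_2 - 1) + ... + (d_p - 1) + 1 elements. -/
open scoped Classical

/-- The product (tensor) vector in `ℂ^{d₁} ⊗ ⋯ ⊗ ℂ^{d_p}`, realized as
`EuclideanSpace ℂ (Π j, Fin (d j))`, built from local vectors `f j`. -/
noncomputable def prodVec {p : ℕ} {d : Fin p → ℕ}
    (f : ∀ j, EuclideanSpace ℂ (Fin (d j))) :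
    EuclideanSpace ℂ (∀ j, Fin (d j)) :=
  WithLp.toLp 2 (fun x => ∏ j, f j (x j))

/-- A product state: a nonzero vector of the form `v₁ ⊗ ⋯ ⊗ v_p`. -/
def IsProductState {p : ℕ} {d : Fin p → ℕ}
    (v : EuclideanSpace ℂ (∀ j, Fin (d j))) : Prop :=
  v ≠ 0 ∧ ∃ f : ∀ j, EuclideanSpace ℂ (Fin (d j)), v = prodVec f

/-- An unextendible product basis: a finite set of mutually orthogonal product
states such that every product state orthogonal to all of them is zero
(equivalently, no product state is orthogonal to all of them). -/
def IsUPB {p : ℕ} {d : Fin p → ℕ}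
    (S : Finset (EuclideanSpace ℂ (∀ j, Fin (d j)))) : Prop :=
  (∀ v ∈ S, IsProductState v) ∧
  (∀ v ∈ S, ∀ w ∈ S, v ≠ w → (inner ℂ v w : ℂ) = 0) ∧
  ∀ z : EuclideanSpace ℂ (∀ j, Fin (d j)),
    IsProductState z → ¬ (∀ v ∈ S, (inner ℂ v z : ℂ) = 0)

/-!
If `S` had at most `∑ j, (d j - 1)` elements, split it into `p` groups, the `j`-th of size at
most `d j - 1`. The `j`-th local factors of the states in group `j` span a proper subspace of
`ℂ^{d j}`, so some nonzero `z j` is orthogonal to all of them, and then `z₁ ⊗ ⋯ ⊗ z_p` is a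
product state orthogonal to every element of `S`, since `⟪⊗ vⱼ, ⊗ zⱼ⟫ = ∏ ⟪vⱼ, zⱼ⟫`.
-/

open Module

lemma exists_fiber_card_le {κ ι : Type*} [Fintype κ] [Fintype ι] (n : ι → ℕ)
    (h : Fintype.card κ ≤ ∑ j, n j) :
    ∃ g : κ → ι, ∀ j, Nat.card {k // g k = j} ≤ n j := by
  obtain ⟨e⟩ := Function.Embedding.nonempty_of_card_le (β := Σ j, Fin (n j)) (by simpa using h)
  refine ⟨fun k => (e k).1, fun j => ?_⟩
  calc Nat.card {k // (e k).1 = j}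
      ≤ Nat.card {x : Σ j, Fin (n j) // x.1 = j} :=
        Nat.card_le_card_of_injective (fun k => ⟨e k, k.2⟩) fun _ _ h =>
          Subtype.ext (e.injective (congrArg Subtype.val h))
    _ = n j := by rw [Nat.card_congr (Equiv.sigmaSubtype j), Nat.card_eq_fintype_card,
      Fintype.card_fin]

lemma exists_ne_zero_forall_inner_eq_zero {𝕜 E κ : Type*} [RCLike 𝕜] [NormedAddCommGroup E]
    [InnerProductSpace 𝕜 E] [FiniteDimensional 𝕜 E] [Finite κ] (u : κ → E)
    (h : Nat.card κ < finrank 𝕜 E) :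
    ∃ z ≠ 0, ∀ k, (inner 𝕜 (u k) z : 𝕜) = 0 := by
  set K := Submodule.span 𝕜 (Set.range u)
  have hK_lt : finrank 𝕜 K < finrank 𝕜 E := by
    have := Fintype.ofFinite κ
    rw [Nat.card_eq_fintype_card] at h
    exact (finrank_range_le_card u).trans_lt h
  have hK : Kᗮ ≠ ⊥ := by
    rw [Ne, Submodule.orthogonal_eq_bot_iff]
    intro hK_top
    rw [hK_top, finrank_top] at hK_lt
    exact hK_lt.false
  obtain ⟨z, hzK, hz0⟩ := Submodule.exists_mem_ne_zero_of_ne_bot hK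
  exact ⟨z, hz0, fun k =>
    Submodule.inner_right_of_mem_orthogonal (Submodule.subset_span (Set.mem_range_self k)) hzK⟩

section ProductStates

variable {p : ℕ} {d : Fin p → ℕ}

lemma inner_prodVec (f g : ∀ j, EuclideanSpace ℂ (Fin (d j))) :
    (inner ℂ (prodVec f) (prodVec g) : ℂ) = ∏ j, (inner ℂ (f j) (g j) : ℂ) := by
  simp only [PiLp.inner_apply, RCLike.inner_apply', prodVec, Finset.prod_univ_sum,
    Fintype.piFinset_univ, map_prod, Finset.prod_mul_distrib]

lemma prodVec_ne_zero {f : ∀ j, EuclideanSpace ℂ (Fin (d j))} (hf : ∀ j, f j ≠ 0) :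
    prodVec f ≠ 0 := by
  have hx : ∀ j, ∃ i, f j i ≠ 0 := fun j => by
    by_contra! h
    exact hf j (PiLp.ext h)
  choose x hx using hx
  intro h
  have : ∏ j, f j (x j) = 0 := congrArg (fun v => v x) h
  exact Finset.prod_ne_zero_iff.mpr (fun j _ => hx j) this

lemma exists_isProductState_forall_inner_prodVec_eq_zero (hd : ∀ j, 1 ≤ d j)
    {κ : Type*} [Fintype κ] (F : κ → ∀ j, EuclideanSpace ℂ (Fin (d j)))
    (hcard : Fintype.card κ ≤ ∑ j, (d j - 1)) :
    ∃ z, IsProductState z ∧ ∀ k, (inner ℂ (prodVec (F k)) z : ℂ) = 0 := by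
  obtain ⟨g, hg⟩ := exists_fiber_card_le _ hcard
  have hz : ∀ j, ∃ z ≠ 0, ∀ k : {k // g k = j}, (inner ℂ (F k j) z : ℂ) = 0 := fun j =>
    exists_ne_zero_forall_inner_eq_zero _ <| by
      rw [finrank_euclideanSpace_fin]
      exact (hg j).trans_lt (Nat.sub_lt_of_pos_le Nat.one_pos (hd j))
  choose z hz0 hz using hz
  refine ⟨prodVec z, ⟨prodVec_ne_zero hz0, z, rfl⟩, fun k => ?_⟩
  rw [inner_prodVec]
  exact Finset.prod_eq_zero (Finset.mem_univ (g k)) (hz (g k) ⟨k, rfl⟩)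

end ProductStates

theorem stmt0 {p : ℕ} (d : Fin p → ℕ) (hd : ∀ j, 1 ≤ d j)
    (S : Finset (EuclideanSpace ℂ (∀ j, Fin (d j)))) (hS : IsUPB S) :
    (∑ j, (d j - 1)) + 1 ≤ S.card := by
  by_contra! hcard
  choose F hF using fun v : S => (hS.1 v v.2).2
  obtain ⟨z, hz, horth⟩ := exists_isProductState_forall_inner_prodVec_eq_zero hd F
    (by rw [Fintype.card_coe]; omega)
  refine hS.2.2 z hz fun v hv => ?_
  simpa only [← hF] using horth ⟨v, hv⟩
end

section
/- Let U ∈ M_{d × (d-b)}(C) with d ≥ 4 + 2b and b ≥ 0, whose columns are orthonormal, and suppose every r × r submatrix of U is nonsingular for all r ∈ {b+2, ..., d-b} \ {d-b-1}, and every b × b submatrix within the bottom b rows is nonsingular. Let S = {e_0, ..., e_{d-b-1}} ∪ {columns of U} ⊆ C^d, where e_j are the first d-b standard basis vectors of C^d. Then any d + 1 distinct elements of S span C^d. -/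
/-- The inner product of columns `c₁` and `c₂` of a complex matrix. -/
noncomputable def colInner {m n : ℕ} (V : Matrix (Fin m) (Fin n) ℂ)
    (c₁ c₂ : Fin n) : ℂ :=
  ∑ a, (starRingEnd ℂ) (V a c₁) * V a c₂

/-- The family `S`: the first `d - b` standard basis vectors of `ℂ^d`,
together with the columns of `U`. -/
noncomputable def Sfam (d b : ℕ) (U : Matrix (Fin d) (Fin (d - b)) ℂ) :
    Fin (d - b) ⊕ Fin (d - b) → (Fin d → ℂ) :=
  Sum.elim (fun j => Pi.single (Fin.castLE (Nat.sub_le d b) j) (1 : ℂ))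
    (fun c => fun a => U a c)

/-!
If `w` has zero dot product with the chosen vectors, it vanishes at the indices of the chosen
standard basis vectors, so it is supported on `d + 1 - k` rows, where `k` is the number of chosen
columns of `U`; moreover `w ᵥ* U` vanishes at these `k` columns. Any nonsingular square submatrix of
`U` whose rows contain the support of `w` and whose columns are chosen then forces `w = 0`. When
`k = b + 1` all `d - b` standard basis vectors are chosen, the support lies in the bottom `b` rows,
and a bottom `b × b` minor does the job. Otherwise a `k × k` minor works, or a `(k - 1) × (k - 1)`
minor when `k = d - b - 1`, the size the hypotheses skip; `d ≥ 2b + 4` keeps that size at least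
`b + 2`.
-/

open Matrix Finset

lemma eq_zero_of_det_submatrix_ne_zero {K m n r : Type*} [Field K] [Fintype m] [Fintype r]
    [DecidableEq r] (U : Matrix m n K) {w : m → K} {fr : r → m} {fc : r → n}
    (hfr : Function.Injective fr) (hdet : (U.submatrix fr fc).det ≠ 0)
    (hsupp : ∀ a ∉ Set.range fr, w a = 0) (hcol : ∀ i, (w ᵥ* U) (fc i) = 0) :
    w = 0 := by
  have hvecMul : (w ∘ fr) ᵥ* U.submatrix fr fc = 0 := by
    funext i
    rw [Pi.zero_apply, ← hcol i]
    exact Fintype.sum_of_injective fr hfr _ _ (fun a ha => by simp [hsupp a ha])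
      (fun _ => rfl)
  have hrestr : w ∘ fr = 0 := by
    by_contra hne
    exact hdet (exists_vecMul_eq_zero_iff.mp ⟨_, hne, hvecMul⟩)
  funext a
  by_cases ha : a ∈ Set.range fr
  · obtain ⟨i, rfl⟩ := ha
    exact congrFun hrestr i
  · exact hsupp a ha

lemma eq_zero_of_det_submatrix_orderEmbOfFin_ne_zero {K : Type*} [Field K] {m n r : ℕ}
    (U : Matrix (Fin m) (Fin n) K) {w : Fin m → K} {R : Finset (Fin m)} {C : Finset (Fin n)}
    (hR : #R = r) (hC : #C = r)
    (hdet : (U.submatrix (R.orderEmbOfFin hR) (C.orderEmbOfFin hC)).det ≠ 0)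
    (hsupp : ∀ a ∉ R, w a = 0) (hcol : ∀ c ∈ C, (w ᵥ* U) c = 0) : w = 0 :=
  eq_zero_of_det_submatrix_ne_zero U (R.orderEmbOfFin hR).injective hdet
    (fun a ha => hsupp a (by simpa using ha))
    (fun i => hcol _ (C.orderEmbOfFin_mem hC i))

lemma span_eq_top_of_dotProduct_eq_zero {K n : Type*} [Field K] [Fintype n] [DecidableEq n]
    {s : Set (n → K)} (h : ∀ w : n → K, (∀ v ∈ s, w ⬝ᵥ v = 0) → w = 0) :
    Submodule.span K s = ⊤ := by
  rw [← Submodule.dualAnnihilator_eq_bot_iff, eq_bot_iff]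
  intro φ hφ
  obtain ⟨w, rfl⟩ := (dotProductEquiv K n).surjective φ
  rw [Submodule.mem_dualAnnihilator] at hφ
  have hw : w = 0 := h w fun v hv => hφ v (Submodule.subset_span hv)
  simp [hw]

section Sfam

variable {d b : ℕ} (U : Matrix (Fin d) (Fin (d - b)) ℂ) (w : Fin d → ℂ)

lemma dotProduct_Sfam_inl (j : Fin (d - b)) :
    w ⬝ᵥ Sfam d b U (.inl j) = w (Fin.castLE (Nat.sub_le d b) j) := by
  simp [Sfam]

lemma dotProduct_Sfam_inr (c : Fin (d - b)) : w ⬝ᵥ Sfam d b U (.inr c) = (w ᵥ* U) c :=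
  rfl

end Sfam

theorem eq_zero_of_forall_dotProduct_Sfam_eq_zero {d b : ℕ} (hdb : 4 + 2 * b ≤ d)
    {U : Matrix (Fin d) (Fin (d - b)) ℂ}
    (hsub : ∀ r, b + 2 ≤ r → r ≤ d - b → r ≠ d - b - 1 →
      ∀ (fr : Fin r → Fin d) (fc : Fin r → Fin (d - b)),
        StrictMono fr → StrictMono fc → (U.submatrix fr fc).det ≠ 0)
    (hbot : ∀ (fr : Fin b → Fin d) (fc : Fin b → Fin (d - b)),
      StrictMono fr → StrictMono fc → (∀ a, d - b ≤ (fr a).val) →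
        (U.submatrix fr fc).det ≠ 0)
    {T : Finset (Fin (d - b) ⊕ Fin (d - b))} (hT : #T = d + 1) {w : Fin d → ℂ}
    (hw : ∀ t ∈ T, w ⬝ᵥ Sfam d b U t = 0) : w = 0 := by
  set A := T.toLeft
  set B := T.toRight
  have hAB : #A + #B = d + 1 := by rw [card_toLeft_add_card_toRight, hT]
  have hA : #A ≤ d - b := by simpa using card_le_univ A
  have hB : #B ≤ d - b := by simpa using card_le_univ B
  set R₀ := (A.map (Fin.castLEEmb (Nat.sub_le d b)))ᶜ
  have hR₀ : #R₀ = d - #A := by simp [R₀, card_compl]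
  have hsupp : ∀ a ∉ R₀, w a = 0 := by
    intro a ha
    obtain ⟨j, hj, rfl⟩ := mem_map.mp (notMem_compl.mp ha)
    simpa [dotProduct_Sfam_inl] using hw _ (mem_toLeft.mp hj)
  have hcol : ∀ c ∈ B, (w ᵥ* U) c = 0 := by
    intro c hc
    simpa [dotProduct_Sfam_inr] using hw _ (mem_toRight.mp hc)
  by_cases hBb : #B = b + 1
  · obtain ⟨C, hCB, hC⟩ := exists_subset_card_eq (show b ≤ #B by omega)
    have hR₀b : #R₀ = b := by omega
    have hbottom : ∀ a ∈ R₀, d - b ≤ a.val := by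
      intro a ha
      by_contra! hlt
      have hAuniv : A = univ := eq_univ_of_card A (by rw [Fintype.card_fin]; omega)
      exact mem_compl.mp ha (mem_map.mpr ⟨⟨a, hlt⟩, hAuniv ▸ mem_univ _, rfl⟩)
    exact eq_zero_of_det_submatrix_orderEmbOfFin_ne_zero U hR₀b hC
      (hbot _ _ (orderEmbOfFin R₀ hR₀b).strictMono (orderEmbOfFin C hC).strictMono
        fun i => hbottom _ (orderEmbOfFin_mem R₀ hR₀b i))
      hsupp fun c hc => hcol c (hCB hc)
  · obtain ⟨r, hr₁, hr₂, hr₃, hrB, hrR₀, hrd⟩ : ∃ r, b + 2 ≤ r ∧ r ≤ d - b ∧ r ≠ d - b - 1 ∧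
        r ≤ #B ∧ #R₀ ≤ r ∧ r ≤ d := by
      by_cases h : #B = d - b - 1
      · exact ⟨#B - 1, by omega⟩
      · exact ⟨#B, by omega⟩
    obtain ⟨R, hR₀R, hR⟩ := exists_superset_card_eq hrR₀ (by simpa using hrd)
    obtain ⟨C, hCB, hC⟩ := exists_subset_card_eq hrB
    exact eq_zero_of_det_submatrix_orderEmbOfFin_ne_zero U hR hC
      (hsub r hr₁ hr₂ hr₃ _ _ (orderEmbOfFin R hR).strictMono (orderEmbOfFin C hC).strictMono)
      (fun a ha => hsupp a fun h => ha (hR₀R h)) fun c hc => hcol c (hCB hc)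

theorem stmt14_general (d b : ℕ) (hdb : 4 + 2 * b ≤ d)
    (U : Matrix (Fin d) (Fin (d - b)) ℂ)
    (hsub : ∀ r, b + 2 ≤ r → r ≤ d - b → r ≠ d - b - 1 →
      ∀ (fr : Fin r → Fin d) (fc : Fin r → Fin (d - b)),
        StrictMono fr → StrictMono fc → (U.submatrix fr fc).det ≠ 0)
    (hbot : ∀ (fr : Fin b → Fin d) (fc : Fin b → Fin (d - b)),
      StrictMono fr → StrictMono fc → (∀ a, d - b ≤ (fr a).val) →
        (U.submatrix fr fc).det ≠ 0) :
    ∀ T : Finset (Fin (d - b) ⊕ Fin (d - b)), T.card = d + 1 →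
      Submodule.span ℂ (Sfam d b U '' ↑T) = ⊤ := by
  intro T hT
  refine span_eq_top_of_dotProduct_eq_zero fun w hw => ?_
  exact eq_zero_of_forall_dotProduct_Sfam_eq_zero hdb hsub hbot hT
    fun t ht => hw _ (Set.mem_image_of_mem _ ht)

theorem stmt14 (d b : ℕ) (hdb : 4 + 2 * b ≤ d)
    (U : Matrix (Fin d) (Fin (d - b)) ℂ)
    (horth : ∀ c₁ c₂, colInner U c₁ c₂ = if c₁ = c₂ then 1 else 0)
    (hsub : ∀ r, b + 2 ≤ r → r ≤ d - b → r ≠ d - b - 1 →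
      ∀ (fr : Fin r → Fin d) (fc : Fin r → Fin (d - b)),
        StrictMono fr → StrictMono fc → (U.submatrix fr fc).det ≠ 0)
    (hbot : ∀ (fr : Fin b → Fin d) (fc : Fin b → Fin (d - b)),
      StrictMono fr → StrictMono fc → (∀ a, d - b ≤ (fr a).val) →
        (U.submatrix fr fc).det ≠ 0) :
    ∀ T : Finset (Fin (d - b) ⊕ Fin (d - b)), T.card = d + 1 →
      Submodule.span ℂ (Sfam d b U '' ↑T) = ⊤ :=
  stmt14_general d b hdb U hsub hbot
end

section
/- For all integers b ≥ 0 and d ≥ 4 + 2b, and for every fixed choice of row indices 1 ≤ i_1 < ... < i_r ≤ d and column indices 1 ≤ j_1 < ... < j_r ≤ d - b with b + 2 ≤ r ≤ d - b - 2, there exists a d × (d-b) zero-one matrix W with exactly one 1 in each column and at most one 1 in each row, satisfying W_{(j+ℓ) mod (d-b), j} = 0 for all columns j and 0 ≤ ℓ ≤ b, such that the r × r submatrix of W on rows i_1, ..., i_r and columns j_1, ..., j_r is a permutation matrix. -/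
open scoped Classical

private lemma aux_shift_univ {m : ℕ} [NeZero m] (B : Finset (ZMod m))
    (hne : B.Nonempty) (h : ∀ x ∈ B, x + 1 ∈ B) : B = Finset.univ := by
  obtain ⟨x0, hx0⟩ := hne
  have key : ∀ n : ℕ, x0 + (n : ZMod m) ∈ B := by
    intro n
    induction n with
    | zero => simpa using hx0
    | succ k ih =>
      have := h _ ih
      have e : x0 + ((k+1 : ℕ) : ZMod m) = x0 + (k : ZMod m) + 1 := by push_cast; ring
      rwa [e]
  apply Finset.eq_univ_of_forall
  intro y
  have hmem := key ((y - x0).val)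
  have e : (((y - x0).val : ℕ) : ZMod m) = y - x0 := ZMod.natCast_rightInverse _
  rw [e] at hmem
  have e2 : x0 + (y - x0) = y := by ring
  rwa [e2] at hmem

private def aux_grow {m : ℕ} (A : Finset (ZMod m)) : ℕ → Finset (ZMod m)
  | 0 => A
  | k+1 => aux_grow A k ∪ (aux_grow A k).image (· + 1)

private lemma aux_subset_grow {m : ℕ} (A : Finset (ZMod m)) (k : ℕ) : A ⊆ aux_grow A k := by
  induction k with
  | zero => exact Finset.Subset.refl A
  | succ k ih => exact ih.trans Finset.subset_union_left

private lemma aux_mem_grow {m : ℕ} (A : Finset (ZMod m)) (k : ℕ) (x : ZMod m) :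
    x ∈ aux_grow A k ↔ ∃ a ∈ A, ∃ i ≤ k, x = a + (i : ZMod m) := by
  induction k generalizing x with
  | zero =>
    simp only [aux_grow, Nat.le_zero]
    constructor
    · intro hx; exact ⟨x, hx, 0, rfl, by simp⟩
    · rintro ⟨a, ha, i, rfl, rfl⟩; simpa using ha
  | succ k ih =>
    simp only [aux_grow, Finset.mem_union, Finset.mem_image]
    constructor
    · rintro (hx | ⟨y, hy, rfl⟩)
      · obtain ⟨a, ha, i, hi, rfl⟩ := (ih x).mp hx
        exact ⟨a, ha, i, hi.trans (Nat.le_succ k), rfl⟩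
      · obtain ⟨a, ha, i, hi, rfl⟩ := (ih y).mp hy
        exact ⟨a, ha, i+1, by omega, by push_cast; ring⟩
    · rintro ⟨a, ha, i, hi, rfl⟩
      rcases Nat.lt_or_ge i (k+1) with h' | h'
      · exact Or.inl ((ih _).mpr ⟨a, ha, i, by omega, rfl⟩)
      · have hik : i = k + 1 := by omega
        subst hik
        exact Or.inr ⟨a + (k : ZMod m), (ih _).mpr ⟨a, ha, k, le_refl _, rfl⟩, by push_cast; ring⟩

private lemma aux_card_grow {m : ℕ} [NeZero m] (A : Finset (ZMod m)) (hA : A.Nonempty) (k : ℕ)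
    (hne : aux_grow A k ≠ Finset.univ) : A.card + k ≤ (aux_grow A k).card := by
  induction k with
  | zero => simp [aux_grow]
  | succ k ih =>
    have hsub : aux_grow A k ⊆ aux_grow A (k+1) := Finset.subset_union_left
    have hne' : aux_grow A k ≠ Finset.univ := by
      intro h
      exact hne (Finset.eq_univ_of_forall fun x => hsub (h ▸ Finset.mem_univ x))
    have h1 := ih hne'
    have hgne : (aux_grow A k).Nonempty := hA.mono (aux_subset_grow A k)
    have hnotall : ¬ (∀ x ∈ aux_grow A k, x + 1 ∈ aux_grow A k) := by
      intro hall
      exact hne' (aux_shift_univ _ hgne hall)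
    push_neg at hnotall
    obtain ⟨x, hx, hx1⟩ := hnotall
    have hlt : (aux_grow A k).card < (aux_grow A (k+1)).card := by
      apply Finset.card_lt_card
      refine ⟨hsub, fun hsup => hx1 (hsup (Finset.mem_union_right _ (Finset.mem_image_of_mem _ hx)))⟩
    omega

private lemma aux_key {m b : ℕ} (hm : b + 4 ≤ m) (V J : Finset (ZMod m))
    (hV : V.Nonempty) (hJ : J.Nonempty)
    (h : ∀ v ∈ V, ∀ j ∈ J, ∃ ℓ ≤ b, v = j + (ℓ : ZMod m)) :
    V.card + J.card ≤ b + 2 := by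
  haveI : NeZero m := ⟨by omega⟩
  set c := m - b - 1 with hc
  set A := V.image (· + 1) with hA
  have hdisj : ∀ j ∈ J, j ∉ aux_grow A (c - 1) := by
    intro j hj hmem
    rw [aux_mem_grow] at hmem
    obtain ⟨a, ha, i, hi, hx⟩ := hmem
    rw [hA, Finset.mem_image] at ha
    obtain ⟨v, hv, rfl⟩ := ha
    obtain ⟨ℓ, hℓ, hvj⟩ := h v hv j hj
    have hz : ((ℓ + 1 + i : ℕ) : ZMod m) = 0 := by
      have e : j = j + ((ℓ + 1 + i : ℕ) : ZMod m) := by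
        conv_lhs => rw [hx, hvj]
        push_cast
        ring
      have := (left_eq_add).mp e
      exact this
    rw [ZMod.natCast_eq_zero_iff] at hz
    have hle := Nat.le_of_dvd (by omega) hz
    omega
  have hWne : aux_grow A (c - 1) ≠ Finset.univ := by
    intro h'
    obtain ⟨j, hj⟩ := hJ
    exact hdisj j hj (h' ▸ Finset.mem_univ j)
  have h1 := aux_card_grow A (hV.image _) (c - 1) hWne
  have hAcard : A.card = V.card := Finset.card_image_of_injective _ (add_left_injective 1)
  have hdisj2 : Disjoint (aux_grow A (c - 1)) J :=
    Finset.disjoint_right.mpr fun j hj => hdisj j hj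
  have h2 : (aux_grow A (c - 1)).card + J.card ≤ m := by
    have := Finset.card_le_univ (aux_grow A (c - 1) ∪ J)
    rw [Finset.card_union_of_disjoint hdisj2] at this
    simpa [ZMod.card] using this
  omega

/-- Generic matching lemma via Hall's theorem. -/
private lemma aux_matching (d b : ℕ) (hdb : 4 + 2 * b ≤ d)
    {ι κ : Type} [Fintype ι] [Fintype κ]
    (R : κ → Fin d) (C : ι → Fin (d - b))
    (hR : Function.Injective R) (hC : Function.Injective C)
    (hι : Fintype.card ι ≤ Fintype.card κ) (hκ : b + 2 ≤ Fintype.card κ) :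
    ∃ f : ι → κ, Function.Injective f ∧
      ∀ i, ∀ ℓ ≤ b, (R (f i)).val ≠ ((C i).val + ℓ) % (d - b) := by
  have hm4 : b + 4 ≤ d - b := by omega
  haveI : NeZero (d - b) := ⟨by omega⟩
  set t : ι → Finset κ :=
    fun i => Finset.univ.filter (fun k => ∀ ℓ ≤ b, (R k).val ≠ ((C i).val + ℓ) % (d - b)) with ht
  have hall : ∀ s : Finset ι, s.card ≤ (s.biUnion t).card := by
    intro s
    by_contra hlt
    push_neg at hlt
    have hsne : s.Nonempty := by
      rcases Finset.eq_empty_or_nonempty s with rfl | hne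
      · simp at hlt
      · exact hne
    set X : Finset κ := Finset.univ \ s.biUnion t with hX
    have hforb : ∀ k ∈ X, ∀ i ∈ s, ∃ ℓ ≤ b, (R k).val = ((C i).val + ℓ) % (d - b) := by
      intro k hk i hi
      rw [hX, Finset.mem_sdiff] at hk
      have hk2 : k ∉ t i := fun hmem => hk.2 (Finset.mem_biUnion.mpr ⟨i, hi, hmem⟩)
      rw [ht, Finset.mem_filter] at hk2
      push_neg at hk2
      obtain ⟨ℓ, hℓ, he⟩ := hk2 (Finset.mem_univ k)
      exact ⟨ℓ, hℓ, he⟩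
    have hXcard : X.card = Fintype.card κ - (s.biUnion t).card := by
      rw [hX, Finset.card_sdiff_of_subset (Finset.subset_univ _), Finset.card_univ]
    have hXlt : ∀ k ∈ X, (R k).val < d - b := by
      intro k hk
      obtain ⟨i, hi⟩ := hsne
      obtain ⟨ℓ, hℓ, he⟩ := hforb k hk i hi
      rw [he]
      exact Nat.mod_lt _ (by omega)
    have hXne : X.Nonempty := by
      rw [← Finset.card_pos, hXcard]
      have : (s.biUnion t).card < Fintype.card κ := by
        calc (s.biUnion t).card < s.card := hlt
        _ ≤ Fintype.card ι := le_trans (Finset.card_le_univ s) (le_of_eq Finset.card_univ)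
        _ ≤ Fintype.card κ := hι
      omega
    set V : Finset (ZMod (d - b)) := X.image (fun k => ((R k).val : ZMod (d - b))) with hV
    set J : Finset (ZMod (d - b)) := s.image (fun i => ((C i).val : ZMod (d - b))) with hJ
    have hVcard : V.card = X.card := by
      rw [hV]
      apply Finset.card_image_of_injOn
      intro k hk k' hk' he
      have h1 : ((R k).val : ZMod (d - b)).val = ((R k').val : ZMod (d - b)).val := congrArg ZMod.val he
      rw [ZMod.val_cast_of_lt (hXlt k (Finset.mem_coe.mp hk)),
        ZMod.val_cast_of_lt (hXlt k' (Finset.mem_coe.mp hk'))] at h1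
      exact hR (Fin.val_injective h1)
    have hJcard : J.card = s.card := by
      rw [hJ]
      apply Finset.card_image_of_injOn
      intro i hi i' hi' he
      have h1 : ((C i).val : ZMod (d - b)).val = ((C i').val : ZMod (d - b)).val := congrArg ZMod.val he
      rw [ZMod.val_cast_of_lt (C i).isLt, ZMod.val_cast_of_lt (C i').isLt] at h1
      exact hC (Fin.val_injective h1)
    have hkey := aux_key hm4 V J (hXne.image _) (hsne.image _) ?_
    · have : Fintype.card κ + 1 ≤ b + 2 := by
        rw [hVcard, hJcard, hXcard] at hkey
        omega
      omega
    · rintro v hv j hj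
      rw [hV, Finset.mem_image] at hv
      rw [hJ, Finset.mem_image] at hj
      obtain ⟨k, hk, rfl⟩ := hv
      obtain ⟨i, hi, rfl⟩ := hj
      obtain ⟨ℓ, hℓ, he⟩ := hforb k hk i hi
      refine ⟨ℓ, hℓ, ?_⟩
      rw [he]
      push_cast [ZMod.natCast_mod]
      ring
  obtain ⟨f, hfinj, hf⟩ := (Finset.all_card_le_biUnion_card_iff_exists_injective t).mp hall
  refine ⟨f, hfinj, fun i => ?_⟩
  have := hf i
  rw [ht, Finset.mem_filter] at this
  exact this.2

theorem stmt15 (d b r : ℕ) (hdb : 4 + 2 * b ≤ d)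
    (hr1 : b + 2 ≤ r) (hr2 : r ≤ d - b - 2)
    (fr : Fin r → Fin d) (fc : Fin r → Fin (d - b))
    (hfr : StrictMono fr) (hfc : StrictMono fc) :
    ∃ W : Matrix (Fin d) (Fin (d - b)) ℕ,
      -- `W` is a zero-one matrix
      (∀ a c, W a c = 0 ∨ W a c = 1) ∧
      -- exactly one `1` in each column
      (∀ c, ∃! a, W a c = 1) ∧
      -- at most one `1` in each row
      (∀ a, (Finset.univ.filter fun c => W a c = 1).card ≤ 1) ∧
      -- the prescribed zero pattern: `W_{(j+ℓ) mod (d-b), j} = 0` for `0 ≤ ℓ ≤ b`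
      (∀ (j : Fin (d - b)) (ℓ : ℕ), ℓ ≤ b →
        W ⟨(j.val + ℓ) % (d - b),
            lt_of_lt_of_le (Nat.mod_lt _ (by omega)) (Nat.sub_le d b)⟩ j = 0) ∧
      -- the submatrix on rows `fr` and columns `fc` is a permutation matrix
      ∃ σ : Equiv.Perm (Fin r), ∀ a c : Fin r,
        W (fr a) (fc c) = if σ a = c then 1 else 0 := by
  have hrinj := hfr.injective
  have hcinj := hfc.injective
  -- Application 1: match selected columns to selected rows
  obtain ⟨g, hginj, hg⟩ := aux_matching d b hdb fr fc hrinj hcinj (le_refl _)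
    (by simpa using hr1)
  -- Application 2: match unselected columns to unselected rows
  have hcard1 : Fintype.card {j : Fin (d - b) // j ∉ Finset.univ.image fc} = (d - b) - r := by
    rw [Fintype.card_subtype]
    have : (Finset.univ.filter (fun j => j ∉ Finset.univ.image fc)) =
        Finset.univ \ Finset.univ.image fc := by
      ext j; simp
    rw [this, Finset.card_sdiff_of_subset (Finset.subset_univ _), Finset.card_univ,
      Finset.card_image_of_injective _ hcinj]
    simp
  have hcard2 : Fintype.card {v : Fin d // v ∉ Finset.univ.image fr} = d - r := by
    rw [Fintype.card_subtype]
    have : (Finset.univ.filter (fun v => v ∉ Finset.univ.image fr)) =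
        Finset.univ \ Finset.univ.image fr := by
      ext v; simp
    rw [this, Finset.card_sdiff_of_subset (Finset.subset_univ _), Finset.card_univ,
      Finset.card_image_of_injective _ hrinj]
    simp
  obtain ⟨h, hhinj, hh⟩ := aux_matching d b hdb
    (fun v : {v : Fin d // v ∉ Finset.univ.image fr} => v.val)
    (fun j : {j : Fin (d - b) // j ∉ Finset.univ.image fc} => j.val)
    Subtype.val_injective Subtype.val_injective
    (by rw [hcard1, hcard2]; omega) (by rw [hcard2]; omega)
  -- define the column-to-row assignment
  set φ : Fin (d - b) → Fin d := fun j =>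
    if hj : ∃ c, fc c = j then fr (g hj.choose)
    else (h ⟨j, by simpa using fun c => fun hc => hj ⟨c, hc⟩⟩).val with hφ
  have hφc : ∀ c : Fin r, φ (fc c) = fr (g c) := by
    intro c
    have hj : ∃ c', fc c' = fc c := ⟨c, rfl⟩
    rw [hφ]
    simp only [dif_pos hj]
    congr 1
    exact congrArg g (hcinj hj.choose_spec)
  have hφout : ∀ (j : Fin (d - b)) (hj : ¬ ∃ c, fc c = j),
      φ j ∉ Finset.univ.image fr ∧
      ∀ ℓ ≤ b, (φ j).val ≠ (j.val + ℓ) % (d - b) := by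
    intro j hj
    rw [hφ]
    simp only [dif_neg hj]
    exact ⟨(h _).2, fun ℓ hℓ => hh _ ℓ hℓ⟩
  have hφavoid : ∀ (j : Fin (d - b)) (ℓ : ℕ), ℓ ≤ b → (φ j).val ≠ (j.val + ℓ) % (d - b) := by
    intro j ℓ hℓ
    by_cases hj : ∃ c, fc c = j
    · obtain ⟨c, rfl⟩ := hj
      rw [hφc c]
      exact hg c ℓ hℓ
    · exact (hφout j hj).2 ℓ hℓ
  have hφinj : Function.Injective φ := by
    intro j j' he
    by_cases hj : ∃ c, fc c = j <;> by_cases hj' : ∃ c, fc c = j'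
    · obtain ⟨c, rfl⟩ := hj
      obtain ⟨c', rfl⟩ := hj'
      rw [hφc, hφc] at he
      exact congrArg fc (hginj (hrinj he))
    · obtain ⟨c, rfl⟩ := hj
      rw [hφc] at he
      exact absurd (Finset.mem_image_of_mem fr (Finset.mem_univ (g c)))
        (he ▸ (hφout j' hj').1)
    · obtain ⟨c', rfl⟩ := hj'
      rw [hφc] at he
      exact absurd (Finset.mem_image_of_mem fr (Finset.mem_univ (g c')))
        (he ▸ (hφout j hj).1)
    · rw [hφ] at he
      simp only [dif_neg hj, dif_neg hj'] at he
      have h2 := hhinj (Subtype.val_injective he)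
      exact Subtype.mk_eq_mk.mp h2
  refine ⟨fun a j => if φ j = a then 1 else 0, ?_, ?_, ?_, ?_, ?_⟩
  · intro a c
    by_cases h' : φ c = a <;> simp [h']
  · intro c
    refine ⟨φ c, by simp, fun a ha => ?_⟩
    by_cases h' : φ c = a
    · exact h'.symm
    · simp [h'] at ha
  · intro a
    apply Finset.card_le_one.mpr
    intro j hj j' hj'
    simp only [Finset.mem_filter] at hj hj'
    have h1 : φ j = a := by
      by_contra h'
      simp [h'] at hj
    have h2 : φ j' = a := by
      by_contra h'
      simp [h'] at hj'
    exact hφinj (h1.trans h2.symm)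
  · intro j ℓ hℓ
    exact if_neg (fun he => hφavoid j ℓ hℓ (congrArg Fin.val he))
  · have hgbij : Function.Bijective g := (Finite.injective_iff_bijective).mp hginj
    refine ⟨(Equiv.ofBijective g hgbij).symm, fun a c => ?_⟩
    show (if φ (fc c) = fr a then (1:ℕ) else 0) = _
    rw [hφc]
    by_cases h' : g c = a
    · rw [if_pos (congrArg fr h'), if_pos]
      exact (Equiv.symm_apply_eq _).mpr (by rw [Equiv.ofBijective_apply]; exact h'.symm)
    · rw [if_neg (fun he => h' (hrinj he)), if_neg]
      intro he
      have h2 := (Equiv.symm_apply_eq _).mp he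
      rw [Equiv.ofBijective_apply] at h2
      exact h' h2.symm
end
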